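/- Let T > 0, let A : ℝ → ℍ^{n×n} be continuous with A(t+T) = A(t), and let M be the principal fundamental matrix of ẋ = A(t)x with M(0) = I. Then: (i) the system has a nontrivial T-periodic solution (a solution x not identically zero with x(t+T) = x(t) for all t) if and only if 1 is a characteristic multiplier, i.e. 1 is a standard eigenvalue of M(T); (ii) if −1 is a characteristic multiplier (i.e. −1 is an eigenvalue of χ_{M(T)}), then the system has a nontrivial 2T-periodic solution. -/

import Mathlib

open Matrix Polynomial
open scoped Quaternion

noncomputable section

/-- The two complex components of a quaternion: `q = c1 q + (c2 q) * j`,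
identifying `ℂ` with the real span of `1` and `i` in `ℍ`. -/
def Quaternion.c1 (q : ℍ[ℝ]) : ℂ := ⟨q.re, q.imI⟩

def Quaternion.c2 (q : ℍ[ℝ]) : ℂ := ⟨q.imJ, q.imK⟩

/-- The embedding of `ℂ` into `ℍ` as the real span of `1` and `i`. -/
def Complex.toQuat (z : ℂ) : ℍ[ℝ] := ⟨z.re, z.im, 0, 0⟩

/-- The complex adjoint matrix `χ_A` of a quaternion matrix `A = A₁ + A₂·j`:
the block matrix `[[A₁, A₂], [-conj A₂, conj A₁]]`. -/
def chiMat {n : ℕ} (A : Matrix (Fin n) (Fin n) ℍ[ℝ]) :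
    Matrix (Fin n ⊕ Fin n) (Fin n ⊕ Fin n) ℂ :=
  Matrix.fromBlocks (A.map Quaternion.c1) (A.map Quaternion.c2)
    ((-(A.map Quaternion.c2)).map (starRingEnd ℂ)) ((A.map Quaternion.c1).map (starRingEnd ℂ))

/-- `ρ` is a standard eigenvalue of the quaternion matrix `A`: an eigenvalue of the
complex adjoint matrix `χ_A` with nonnegative imaginary part. -/
def IsStdEigenvalue {n : ℕ} (A : Matrix (Fin n) (Fin n) ℍ[ℝ]) (ρ : ℂ) : Prop :=
  (chiMat A).charpoly.IsRoot ρ ∧ 0 ≤ ρ.im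

/-- `s` is the multiset of standard eigenvalues of `A` counted with multiplicity:
it has `n` elements, all with nonnegative imaginary part, and the characteristic
polynomial of `χ_A` is `∏_{z ∈ s} (X - z)·(X - conj z)`. -/
def IsStdEigs {n : ℕ} (A : Matrix (Fin n) (Fin n) ℍ[ℝ]) (s : Multiset ℂ) : Prop :=
  Multiset.card s = n ∧ (∀ z ∈ s, 0 ≤ z.im) ∧
    (chiMat A).charpoly =
      (s.map (fun z => (X - C z) * (X - C (starRingEnd ℂ z)))).prod

/-- `x : ℝ → ℍ^n` is a solution of the linear quaternionic system `ẋ = A(t)x`. -/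
def IsSol {n : ℕ} (A : ℝ → Matrix (Fin n) (Fin n) ℍ[ℝ]) (x : ℝ → Fin n → ℍ[ℝ]) : Prop :=
  ∀ t : ℝ, HasDerivAt x ((A t).mulVec (x t)) t

/-- The norm `‖x‖ = Σ_k |x_k|` on `ℍ^n`. -/
def vecNorm {n : ℕ} (x : Fin n → ℍ[ℝ]) : ℝ := ∑ k, ‖x k‖

/-- The norm `‖A‖ = Σ_{i,j} |a_{ij}|` on `ℍ^{n×n}`. -/
def matNorm {n : ℕ} (A : Matrix (Fin n) (Fin n) ℍ[ℝ]) : ℝ := ∑ i, ∑ j, ‖A i j‖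

/-- Stability (in the sense of Lyapunov) of the system `ẋ = A(t)x` at `t₀`. -/
def StableAt {n : ℕ} (A : ℝ → Matrix (Fin n) (Fin n) ℍ[ℝ]) (t₀ : ℝ) : Prop :=
  ∀ ε > (0:ℝ), ∃ δ > (0:ℝ), ∀ x : ℝ → Fin n → ℍ[ℝ], IsSol A x →
    vecNorm (x t₀) < δ → ∀ t ≥ t₀, vecNorm (x t) < ε

/-- Asymptotic stability of the system `ẋ = A(t)x` at `t₀`. -/
def AsympStableAt {n : ℕ} (A : ℝ → Matrix (Fin n) (Fin n) ℍ[ℝ]) (t₀ : ℝ) : Prop :=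
  StableAt A t₀ ∧ ∃ δ > (0:ℝ), ∀ x : ℝ → Fin n → ℍ[ℝ], IsSol A x →
    vecNorm (x t₀) < δ →
      Filter.Tendsto (fun t => vecNorm (x t)) Filter.atTop (nhds 0)

/-- `M` is a fundamental matrix of `ẋ = A(t)x`: entrywise `M'(t) = A(t)·M(t)`
and `M(t)` is invertible for every `t`. -/
def IsFundamental {n : ℕ} (A M : ℝ → Matrix (Fin n) (Fin n) ℍ[ℝ]) : Prop :=
  (∀ (t : ℝ) (i j : Fin n), HasDerivAt (fun s => M s i j) ((A t * M t) i j) t) ∧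
    ∀ t : ℝ, IsUnit (M t)

/-!
Uniqueness for linear equations with continuous coefficients gives `x(t) = M(t) x(0)` for every
solution, and since `t ↦ M(t + T)` solves the same equation, `M(t + T) = M(t) M(T)`. Hence, for
real `ρ`, solutions with `x(t + T) = ρ x(t)` correspond to vectors with `M(T) v = ρ v`. A real
scalar commutes with quaternions, and `χ` intertwines `ℍⁿ` with `ℂ²ⁿ`, so such `v ≠ 0` exist
exactly when `ρ` is a root of the characteristic polynomial of `χ_{M(T)}`. For `ρ = 1` this is
(i); for `ρ = -1` the solution is `T`-antiperiodic, hence `2T`-periodic.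
-/

open Quaternion Set

namespace Quaternion

lemma c1_add (p q : ℍ[ℝ]) : (p + q).c1 = p.c1 + q.c1 := by
  apply Complex.ext <;> simp [c1]

lemma c2_add (p q : ℍ[ℝ]) : (p + q).c2 = p.c2 + q.c2 := by
  apply Complex.ext <;> simp [c2]

lemma c1_mul (p q : ℍ[ℝ]) : (p * q).c1 = p.c1 * q.c1 - p.c2 * starRingEnd ℂ q.c2 := by
  apply Complex.ext <;> simp [c1, c2, re_mul, imI_mul, Complex.mul_re, Complex.mul_im] <;> ring

lemma c2_mul (p q : ℍ[ℝ]) : (p * q).c2 = p.c1 * q.c2 + p.c2 * starRingEnd ℂ q.c1 := by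
  apply Complex.ext <;> simp [c1, c2, imJ_mul, imK_mul, Complex.mul_re, Complex.mul_im] <;> ring

lemma c1_smul (r : ℝ) (q : ℍ[ℝ]) : (r • q).c1 = r • q.c1 := by
  apply Complex.ext <;> simp [c1]

lemma c2_smul (r : ℝ) (q : ℍ[ℝ]) : (r • q).c2 = r • q.c2 := by
  apply Complex.ext <;> simp [c2]

lemma c1_sum {ι : Type*} (s : Finset ι) (f : ι → ℍ[ℝ]) :
    (∑ i ∈ s, f i).c1 = ∑ i ∈ s, (f i).c1 :=
  map_sum (AddMonoidHom.mk' c1 c1_add) f s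

lemma c2_sum {ι : Type*} (s : Finset ι) (f : ι → ℍ[ℝ]) :
    (∑ i ∈ s, f i).c2 = ∑ i ∈ s, (f i).c2 :=
  map_sum (AddMonoidHom.mk' c2 c2_add) f s

end Quaternion

/-- The first column of `chiMat` of `v` viewed as an `n × 1` matrix. -/
def chiVec {n : ℕ} (v : Fin n → ℍ[ℝ]) : Fin n ⊕ Fin n → ℂ :=
  Sum.elim (fun i => (v i).c1) (fun i => -starRingEnd ℂ (v i).c2)

lemma chiVec_injective {n : ℕ} : Function.Injective (chiVec (n := n)) := by
  intro v w h
  funext i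
  have h1 : (v i).c1 = (w i).c1 := congrFun h (Sum.inl i)
  have h2 : (v i).c2 = (w i).c2 :=
    (starRingEnd ℂ).injective (by simpa [chiVec] using congrFun h (Sum.inr i))
  ext
  exacts [congrArg Complex.re h1, congrArg Complex.im h1, congrArg Complex.re h2,
    congrArg Complex.im h2]

lemma chiVec_surjective {n : ℕ} : Function.Surjective (chiVec (n := n)) := by
  intro u
  refine ⟨fun i => ⟨(u (.inl i)).re, (u (.inl i)).im, -(u (.inr i)).re, (u (.inr i)).im⟩, ?_⟩
  funext k
  rcases k with i | i <;> apply Complex.ext <;> simp [chiVec, c1, c2]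

@[simp]
lemma chiVec_eq_zero_iff {n : ℕ} {v : Fin n → ℍ[ℝ]} : chiVec v = 0 ↔ v = 0 := by
  have h0 : chiVec (0 : Fin n → ℍ[ℝ]) = 0 := by
    funext k
    rcases k with i | i <;> apply Complex.ext <;> simp [chiVec, c1, c2]
  rw [← h0, chiVec_injective.eq_iff]

lemma chiVec_smul {n : ℕ} (r : ℝ) (v : Fin n → ℍ[ℝ]) : chiVec (r • v) = (r : ℂ) • chiVec v := by
  funext k
  rcases k with i | i <;> simp [chiVec, c1_smul, c2_smul, Complex.real_smul]

lemma chiMat_mulVec_chiVec {n : ℕ} (B : Matrix (Fin n) (Fin n) ℍ[ℝ]) (v : Fin n → ℍ[ℝ]) :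
    chiMat B *ᵥ chiVec v = chiVec (B *ᵥ v) := by
  funext k
  rcases k with i | i
  · simp only [chiMat, chiVec, mulVec, dotProduct, Fintype.sum_sum_type, fromBlocks_apply₁₁,
      fromBlocks_apply₁₂, map_apply, c1_sum, Sum.elim_inl, Sum.elim_inr, ← Finset.sum_add_distrib]
    refine Finset.sum_congr rfl fun j _ => ?_
    rw [c1_mul]
    ring
  · simp only [chiMat, chiVec, mulVec, dotProduct, Fintype.sum_sum_type, fromBlocks_apply₂₁,
      fromBlocks_apply₂₂, map_apply, Matrix.neg_apply, c2_sum, map_sum, Sum.elim_inl, Sum.elim_inr,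
      ← Finset.sum_add_distrib, ← Finset.sum_neg_distrib]
    refine Finset.sum_congr rfl fun j _ => ?_
    simp only [map_neg, c2_mul, map_add, map_mul, Complex.conj_conj]
    ring

lemma Matrix.isRoot_charpoly_iff_exists_mulVec_eq_smul {K m : Type*} [Field K] [Fintype m]
    [DecidableEq m] (B : Matrix m m K) (μ : K) :
    B.charpoly.IsRoot μ ↔ ∃ u ≠ 0, B *ᵥ u = μ • u := by
  rw [← Matrix.charpoly_toLin', ← Module.End.hasEigenvalue_iff_isRoot_charpoly,
    Module.End.hasEigenvalue_iff, Submodule.ne_bot_iff]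
  simp [and_comm]

lemma isRoot_charpoly_chiMat_ofReal_iff {n : ℕ} (B : Matrix (Fin n) (Fin n) ℍ[ℝ]) (ρ : ℝ) :
    (chiMat B).charpoly.IsRoot (ρ : ℂ) ↔ ∃ v ≠ 0, B *ᵥ v = ρ • v := by
  rw [isRoot_charpoly_iff_exists_mulVec_eq_smul, chiVec_surjective.exists]
  simp only [ne_eq, chiVec_eq_zero_iff, chiMat_mulVec_chiVec, ← chiVec_smul,
    chiVec_injective.eq_iff]

section LinearSystem

attribute [local instance] Matrix.linftyOpSeminormedAddCommGroup

variable {n : ℕ} {A : ℝ → Matrix (Fin n) (Fin n) ℍ[ℝ]}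

lemma Matrix.lipschitzWith_mulVec {l m α : Type*} [Fintype l] [Fintype m]
    [NonUnitalSeminormedRing α] (B : Matrix l m α) :
    LipschitzWith ‖B‖₊ (B *ᵥ ·) :=
  LipschitzWith.of_dist_le_mul fun v w => by
    simpa only [coe_nnnorm, dist_eq_norm, ← mulVec_sub] using linfty_opNorm_mulVec B (v - w)

lemma IsSol.eq_of_apply_eq (hA : Continuous A) {x y : ℝ → Fin n → ℍ[ℝ]} (hx : IsSol A x)
    (hy : IsSol A y) {t₀ : ℝ} (h : x t₀ = y t₀) : x = y := by
  funext t
  set R := |t| + |t₀| + 1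
  obtain ⟨K, hK⟩ := (isCompact_Icc (a := -R) (b := R)).exists_bound_of_continuousOn
    hA.continuousOn
  have hlip : ∀ s ∈ Ioo (-R) R, LipschitzOnWith K.toNNReal (A s *ᵥ ·) univ := fun s hs =>
    ((A s).lipschitzWith_mulVec.weaken
      (by simpa using Real.toNNReal_le_toNNReal (hK s (Ioo_subset_Icc_self hs)))).lipschitzOnWith
  have hmem : ∀ u, |u| < R → u ∈ Ioo (-R) R := fun u hu => abs_lt.mp hu
  exact ODE_solution_unique_of_mem_Ioo hlip (hmem t₀ (by linarith [abs_nonneg t]))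
    (fun s _ => ⟨hx s, mem_univ _⟩) (fun s _ => ⟨hy s, mem_univ _⟩) h
    (hmem t (by linarith [abs_nonneg t₀]))

lemma IsSol.comp_add_period {T : ℝ} (hAper : ∀ t, A (t + T) = A t) {x : ℝ → Fin n → ℍ[ℝ]}
    (hx : IsSol A x) : IsSol A (fun t => x (t + T)) := fun t => by
  have h := (hx (t + T)).scomp t ((hasDerivAt_id t).add_const T)
  rwa [hAper t, one_smul] at h

lemma isSol_mulVec {M : ℝ → Matrix (Fin n) (Fin n) ℍ[ℝ]}
    (hM : ∀ (t : ℝ) (i j : Fin n), HasDerivAt (fun s => M s i j) ((A t * M t) i j) t)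
    (c : Fin n → ℍ[ℝ]) : IsSol A (fun t => M t *ᵥ c) := fun t => by
  refine hasDerivAt_pi.2 fun i => ?_
  rw [mulVec_mulVec]
  exact HasDerivAt.fun_sum (u := Finset.univ) fun j _ => (hM t i j).mul_const (c j)

end LinearSystem

section Floquet

variable {n : ℕ} {T : ℝ} {A M : ℝ → Matrix (Fin n) (Fin n) ℍ[ℝ]}

lemma IsSol.eq_mulVec_apply_zero (hA : Continuous A)
    (hM : ∀ (t : ℝ) (i j : Fin n), HasDerivAt (fun s => M s i j) ((A t * M t) i j) t)
    (hM0 : M 0 = 1) {x : ℝ → Fin n → ℍ[ℝ]} (hx : IsSol A x) :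
    x = fun t => M t *ᵥ x 0 :=
  hx.eq_of_apply_eq hA (isSol_mulVec hM _) (t₀ := 0) (by simp [hM0])

lemma mulVec_add_period (hA : Continuous A)
    (hM : ∀ (t : ℝ) (i j : Fin n), HasDerivAt (fun s => M s i j) ((A t * M t) i j) t)
    (hM0 : M 0 = 1) (hAper : ∀ t, A (t + T) = A t) (c : Fin n → ℍ[ℝ]) (t : ℝ) :
    M (t + T) *ᵥ c = M t *ᵥ (M T *ᵥ c) :=
  congrFun (((isSol_mulVec hM c).comp_add_period hAper).eq_of_apply_eq hA (isSol_mulVec hM _)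
    (t₀ := 0) (by simp [hM0])) t

lemma exists_isSol_add_period_eq_smul_iff (hA : Continuous A)
    (hM : ∀ (t : ℝ) (i j : Fin n), HasDerivAt (fun s => M s i j) ((A t * M t) i j) t)
    (hM0 : M 0 = 1) (hAper : ∀ t, A (t + T) = A t) (ρ : ℝ) :
    (∃ x : ℝ → Fin n → ℍ[ℝ], IsSol A x ∧ x ≠ 0 ∧ ∀ t, x (t + T) = ρ • x t) ↔
      (chiMat (M T)).charpoly.IsRoot ρ := by
  rw [isRoot_charpoly_chiMat_ofReal_iff]
  constructor
  · rintro ⟨x, hx, hx0, hper⟩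
    have hrep := hx.eq_mulVec_apply_zero hA hM hM0
    refine ⟨x 0, fun h => hx0 ?_, by simpa [congrFun hrep T] using hper 0⟩
    rw [hrep, h]
    exact funext fun t => mulVec_zero (M t)
  · rintro ⟨v, hv, hMT⟩
    refine ⟨fun t => M t *ᵥ v, isSol_mulVec hM v, fun h => hv ?_, fun t => ?_⟩
    · simpa [hM0] using congrFun h 0
    · dsimp only
      rw [mulVec_add_period hA hM hM0 hAper, hMT, mulVec_smul]

end Floquet

theorem stmt18_general {n : ℕ} (T : ℝ) (A M : ℝ → Matrix (Fin n) (Fin n) ℍ[ℝ])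
    (hA : Continuous A) (hAper : ∀ t, A (t + T) = A t) (hM : IsFundamental A M)
    (hM0 : M 0 = 1) :
    ((∃ x : ℝ → Fin n → ℍ[ℝ], IsSol A x ∧ x ≠ 0 ∧ ∀ t, x (t + T) = x t) ↔
      IsStdEigenvalue (M T) 1) ∧
    ((chiMat (M T)).charpoly.IsRoot (-1) →
      ∃ x : ℝ → Fin n → ℍ[ℝ], IsSol A x ∧ x ≠ 0 ∧ ∀ t, x (t + 2 * T) = x t) := by
  have floquet := exists_isSol_add_period_eq_smul_iff hA hM.1 hM0 hAper
  refine ⟨by simpa [IsStdEigenvalue] using floquet 1, fun hroot => ?_⟩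
  obtain ⟨x, hx, hx0, hanti⟩ := (floquet (-1)).2 (by simpa using hroot)
  exact ⟨x, hx, hx0, Function.Antiperiodic.periodic_two_mul (by simpa using hanti)⟩

/-- (i) a nontrivial `T`-periodic solution exists iff `1` is a
characteristic multiplier; (ii) if `-1` is a characteristic multiplier then a
nontrivial `2T`-periodic solution exists. -/
theorem stmt18 {n : ℕ} (T : ℝ) (hT : 0 < T) (A M : ℝ → Matrix (Fin n) (Fin n) ℍ[ℝ])
    (hA : Continuous A) (hAper : ∀ t, A (t + T) = A t) (hM : IsFundamental A M)
    (hM0 : M 0 = 1) :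
    ((∃ x : ℝ → Fin n → ℍ[ℝ], IsSol A x ∧ x ≠ 0 ∧ ∀ t, x (t + T) = x t) ↔
      IsStdEigenvalue (M T) 1) ∧
    ((chiMat (M T)).charpoly.IsRoot (-1) →
      ∃ x : ℝ → Fin n → ℍ[ℝ], IsSol A x ∧ x ≠ 0 ∧ ∀ t, x (t + 2 * T) = x t) :=
  stmt18_general T A M hA hAper hM hM0
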